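/- arXiv:2503.11192 — 2 statements merged into one kernel-verified Lean document; each statement's English description precedes it below -/
import Mathlib

section
/- Let ε > 0 and let ρ⁰, ρ¹, ρ², p⁰, p¹, p² : ℝ² × ℝ → ℝ and u⁰, u¹, u² : ℝ² × ℝ → ℝ² be continuously differentiable, and suppose that for every M ∈ (0, ε) the fields ρ_M = ρ⁰ + M ρ¹ + M² ρ², u_M = u⁰ + M u¹ + M² u², p_M = p⁰ + M p¹ + M² p² satisfy ∂_t(ρ_M u_M) + div(ρ_M u_M ⊗ u_M) + (1/M²) ∇p_M = 0 at every point of ℝ² × ℝ. Then there exist functions P⁰, P¹ : ℝ → ℝ, depending on time only, such that p⁰(x, t) = P⁰(t) and p¹(x, t) = P¹(t) for all (x, t); consequently the mixture pressure has the form p_M(x, t) = P⁰(t) + M P¹(t) + M² p²(x, t), i.e. pressure fluctuations in space are of order M². -/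
/-- Space–time: a point of `ℝ² × ℝ`, written as `((x, y), t)`. -/
abbrev SpaceTime : Type := (ℝ × ℝ) × ℝ

/-- Spatial partial derivative in the first space direction. -/
noncomputable def pdX (f : SpaceTime → ℝ) (z : SpaceTime) : ℝ :=
  deriv (fun s : ℝ => f ((s, z.1.2), z.2)) z.1.1

/-- Spatial partial derivative in the second space direction. -/
noncomputable def pdY (f : SpaceTime → ℝ) (z : SpaceTime) : ℝ :=
  deriv (fun s : ℝ => f ((z.1.1, s), z.2)) z.1.2

/-- Time derivative. -/
noncomputable def pdT (f : SpaceTime → ℝ) (z : SpaceTime) : ℝ :=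
  deriv (fun s : ℝ => f (z.1, s)) z.2

/-- The non-dimensional mixture momentum equation
`∂ₜ(ρ u) + div(ρ u ⊗ u) + (1/M²) ∇p = 0`, written componentwise. -/
def MomentumEq (ρ p : SpaceTime → ℝ) (u : SpaceTime → ℝ × ℝ) (M : ℝ) : Prop :=
  ∀ z : SpaceTime,
    (pdT (fun w => ρ w * (u w).1) z
      + pdX (fun w => ρ w * (u w).1 * (u w).1) z
      + pdY (fun w => ρ w * (u w).1 * (u w).2) z
      + (1 / M ^ 2) * pdX p z = 0)
    ∧
    (pdT (fun w => ρ w * (u w).2) z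
      + pdX (fun w => ρ w * (u w).2 * (u w).1) z
      + pdY (fun w => ρ w * (u w).2 * (u w).2) z
      + (1 / M ^ 2) * pdY p z = 0)

/-- Low-Mach asymptotic expansion `φ_M = φ⁰ + M φ¹ + M² φ²` of a scalar field. -/
def expand (f0 f1 f2 : SpaceTime → ℝ) (M : ℝ) : SpaceTime → ℝ :=
  fun z => f0 z + M * f1 z + M ^ 2 * f2 z

/-- Low-Mach asymptotic expansion of a vector (velocity) field. -/
def expandV (u0 u1 u2 : SpaceTime → ℝ × ℝ) (M : ℝ) : SpaceTime → ℝ × ℝ :=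
  fun z => u0 z + M • u1 z + M ^ 2 • u2 z

/-! ### Auxiliary material for the proof -/

/-- Quadratic expansion `a + M b + M² c` in the Mach number. -/
def ex3 (a b c M : ℝ) : ℝ := a + M * b + M ^ 2 * c

lemma continuous_ex3 (a b c : ℝ) : Continuous fun M => ex3 a b c M := by
  unfold ex3; fun_prop

lemma hasDerivAt_ex3 {f0 f1 f2 : ℝ → ℝ} {d0 d1 d2 : ℝ} {s : ℝ} (M : ℝ)
    (h0 : HasDerivAt f0 d0 s) (h1 : HasDerivAt f1 d1 s) (h2 : HasDerivAt f2 d2 s) :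
    HasDerivAt (fun t => ex3 (f0 t) (f1 t) (f2 t) M) (ex3 d0 d1 d2 M) s :=
  (h0.add (h1.const_mul M)).add (h2.const_mul (M ^ 2))

/-- A continuous function vanishing on `(0, ε)` vanishes at `0`. -/
lemma zero_on_Ioo {f : ℝ → ℝ} (hf : Continuous f) {ε : ℝ} (hε : 0 < ε)
    (hz : ∀ M ∈ Set.Ioo (0:ℝ) ε, f M = 0) : f 0 = 0 := by
  have hmem : Set.Ioo (0:ℝ) ε ∈ nhdsWithin (0:ℝ) (Set.Ioi 0) :=
    Ioo_mem_nhdsGT_of_mem ⟨le_rfl, hε⟩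
  have t1 : Filter.Tendsto f (nhdsWithin (0:ℝ) (Set.Ioi 0)) (nhds (f 0)) :=
    (hf.tendsto 0).mono_left nhdsWithin_le_nhds
  have t2 : Filter.Tendsto f (nhdsWithin (0:ℝ) (Set.Ioi 0)) (nhds 0) := by
    refine Filter.Tendsto.congr' ?_ tendsto_const_nhds
    filter_upwards [hmem] with M hM using (hz M hM).symm
  exact tendsto_nhds_unique t1 t2

/-- If `c0 + M (c1 + M h(M)) = 0` for all `M ∈ (0, ε)` with `h` continuous,
then `c0 = 0` and `c1 = 0`. -/
lemma coeffs_zero {c0 c1 : ℝ} {h : ℝ → ℝ} (hc : Continuous h) {ε : ℝ} (hε : 0 < ε)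
    (hz : ∀ M ∈ Set.Ioo (0:ℝ) ε, c0 + M * (c1 + M * h M) = 0) : c0 = 0 ∧ c1 = 0 := by
  have hg : Continuous fun M => c0 + M * (c1 + M * h M) := by fun_prop
  have h0 : c0 = 0 := by simpa using zero_on_Ioo hg hε hz
  have hz' : ∀ M ∈ Set.Ioo (0:ℝ) ε, c1 + M * h M = 0 := by
    intro M hM
    have hM0 : M ≠ 0 := ne_of_gt hM.1
    have := hz M hM
    rw [h0, zero_add] at this
    exact (mul_eq_zero.mp this).resolve_left hM0
  have h1 : c1 = 0 := by
    simpa using zero_on_Ioo (by fun_prop : Continuous fun M => c1 + M * h M) hε hz'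
  exact ⟨h0, h1⟩

lemma hasDerivAt_pdT (f : SpaceTime → ℝ) (hf : ContDiff ℝ 1 f) (z : SpaceTime) :
    HasDerivAt (fun s : ℝ => f (z.1, s)) (pdT f z) z.2 := by
  have hd : DifferentiableAt ℝ (fun s : ℝ => f (z.1, s)) z.2 :=
    ((hf.differentiable one_ne_zero) (z.1, z.2)).comp z.2 (by fun_prop)
  exact hd.hasDerivAt

lemma hasDerivAt_pdX (f : SpaceTime → ℝ) (hf : ContDiff ℝ 1 f) (z : SpaceTime) :
    HasDerivAt (fun s : ℝ => f ((s, z.1.2), z.2)) (pdX f z) z.1.1 := by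
  have hd : DifferentiableAt ℝ (fun s : ℝ => f ((s, z.1.2), z.2)) z.1.1 :=
    ((hf.differentiable one_ne_zero) ((z.1.1, z.1.2), z.2)).comp z.1.1 (by fun_prop)
  exact hd.hasDerivAt

lemma hasDerivAt_pdY (f : SpaceTime → ℝ) (hf : ContDiff ℝ 1 f) (z : SpaceTime) :
    HasDerivAt (fun s : ℝ => f ((z.1.1, s), z.2)) (pdY f z) z.1.2 := by
  have hd : DifferentiableAt ℝ (fun s : ℝ => f ((z.1.1, s), z.2)) z.1.2 :=
    ((hf.differentiable one_ne_zero) ((z.1.1, z.1.2), z.2)).comp z.1.2 (by fun_prop)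
  exact hd.hasDerivAt

/-- The convective part of one scalar momentum component is, at a fixed space–time
point, a continuous (indeed polynomial) function of the Mach number `M`. -/
lemma exists_E (ρ0 ρ1 ρ2 : SpaceTime → ℝ) (u0 u1 u2 : SpaceTime → ℝ × ℝ)
    (hρ0 : ContDiff ℝ 1 ρ0) (hρ1 : ContDiff ℝ 1 ρ1) (hρ2 : ContDiff ℝ 1 ρ2)
    (hu0 : ContDiff ℝ 1 u0) (hu1 : ContDiff ℝ 1 u1) (hu2 : ContDiff ℝ 1 u2)
    (c : (ℝ × ℝ) →L[ℝ] ℝ) (z : SpaceTime) :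
    ∃ E : ℝ → ℝ, Continuous E ∧ ∀ M : ℝ,
      pdT (fun w => expand ρ0 ρ1 ρ2 M w * c (expandV u0 u1 u2 M w)) z
      + pdX (fun w => expand ρ0 ρ1 ρ2 M w * c (expandV u0 u1 u2 M w)
              * (expandV u0 u1 u2 M w).1) z
      + pdY (fun w => expand ρ0 ρ1 ρ2 M w * c (expandV u0 u1 u2 M w)
              * (expandV u0 u1 u2 M w).2) z
      = E M := by
  have hcu0 : ContDiff ℝ 1 (fun w => c (u0 w)) := c.contDiff.comp hu0
  have hcu1 : ContDiff ℝ 1 (fun w => c (u1 w)) := c.contDiff.comp hu1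
  have hcu2 : ContDiff ℝ 1 (fun w => c (u2 w)) := c.contDiff.comp hu2
  have hU0 : ContDiff ℝ 1 (fun w => (u0 w).1) := contDiff_fst.comp hu0
  have hU1 : ContDiff ℝ 1 (fun w => (u1 w).1) := contDiff_fst.comp hu1
  have hU2 : ContDiff ℝ 1 (fun w => (u2 w).1) := contDiff_fst.comp hu2
  have hV0 : ContDiff ℝ 1 (fun w => (u0 w).2) := contDiff_snd.comp hu0
  have hV1 : ContDiff ℝ 1 (fun w => (u1 w).2) := contDiff_snd.comp hu1
  have hV2 : ContDiff ℝ 1 (fun w => (u2 w).2) := contDiff_snd.comp hu2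
  have dT : ∀ (f : SpaceTime → ℝ), ContDiff ℝ 1 f →
      HasDerivAt (fun s : ℝ => f (z.1, s)) (pdT f z) z.2 :=
    fun f hf => hasDerivAt_pdT f hf z
  have dX : ∀ (f : SpaceTime → ℝ), ContDiff ℝ 1 f →
      HasDerivAt (fun s : ℝ => f ((s, z.1.2), z.2)) (pdX f z) z.1.1 :=
    fun f hf => hasDerivAt_pdX f hf z
  have dY : ∀ (f : SpaceTime → ℝ), ContDiff ℝ 1 f →
      HasDerivAt (fun s : ℝ => f ((z.1.1, s), z.2)) (pdY f z) z.1.2 :=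
    fun f hf => hasDerivAt_pdY f hf z
  refine ⟨fun M =>
    (ex3 (pdT ρ0 z) (pdT ρ1 z) (pdT ρ2 z) M * ex3 (c (u0 z)) (c (u1 z)) (c (u2 z)) M
      + ex3 (ρ0 z) (ρ1 z) (ρ2 z) M
        * ex3 (pdT (fun w => c (u0 w)) z) (pdT (fun w => c (u1 w)) z)
            (pdT (fun w => c (u2 w)) z) M)
    + ((ex3 (pdX ρ0 z) (pdX ρ1 z) (pdX ρ2 z) M * ex3 (c (u0 z)) (c (u1 z)) (c (u2 z)) M
        + ex3 (ρ0 z) (ρ1 z) (ρ2 z) M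
          * ex3 (pdX (fun w => c (u0 w)) z) (pdX (fun w => c (u1 w)) z)
              (pdX (fun w => c (u2 w)) z) M)
        * ex3 ((u0 z).1) ((u1 z).1) ((u2 z).1) M
      + ex3 (ρ0 z) (ρ1 z) (ρ2 z) M * ex3 (c (u0 z)) (c (u1 z)) (c (u2 z)) M
        * ex3 (pdX (fun w => (u0 w).1) z) (pdX (fun w => (u1 w).1) z)
            (pdX (fun w => (u2 w).1) z) M)
    + ((ex3 (pdY ρ0 z) (pdY ρ1 z) (pdY ρ2 z) M * ex3 (c (u0 z)) (c (u1 z)) (c (u2 z)) M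
        + ex3 (ρ0 z) (ρ1 z) (ρ2 z) M
          * ex3 (pdY (fun w => c (u0 w)) z) (pdY (fun w => c (u1 w)) z)
              (pdY (fun w => c (u2 w)) z) M)
        * ex3 ((u0 z).2) ((u1 z).2) ((u2 z).2) M
      + ex3 (ρ0 z) (ρ1 z) (ρ2 z) M * ex3 (c (u0 z)) (c (u1 z)) (c (u2 z)) M
        * ex3 (pdY (fun w => (u0 w).2) z) (pdY (fun w => (u1 w).2) z)
            (pdY (fun w => (u2 w).2) z) M), ?_, ?_⟩
  · apply Continuous.add
    apply Continuous.add
    · exact ((continuous_ex3 _ _ _).mul (continuous_ex3 _ _ _)).add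
        ((continuous_ex3 _ _ _).mul (continuous_ex3 _ _ _))
    · exact ((((continuous_ex3 _ _ _).mul (continuous_ex3 _ _ _)).add
        ((continuous_ex3 _ _ _).mul (continuous_ex3 _ _ _))).mul (continuous_ex3 _ _ _)).add
        (((continuous_ex3 _ _ _).mul (continuous_ex3 _ _ _)).mul (continuous_ex3 _ _ _))
    · exact ((((continuous_ex3 _ _ _).mul (continuous_ex3 _ _ _)).add
        ((continuous_ex3 _ _ _).mul (continuous_ex3 _ _ _))).mul (continuous_ex3 _ _ _)).add
        (((continuous_ex3 _ _ _).mul (continuous_ex3 _ _ _)).mul (continuous_ex3 _ _ _))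
  · intro M
    have hT :
        pdT (fun w => expand ρ0 ρ1 ρ2 M w * c (expandV u0 u1 u2 M w)) z
        = ex3 (pdT ρ0 z) (pdT ρ1 z) (pdT ρ2 z) M * ex3 (c (u0 z)) (c (u1 z)) (c (u2 z)) M
          + ex3 (ρ0 z) (ρ1 z) (ρ2 z) M
            * ex3 (pdT (fun w => c (u0 w)) z) (pdT (fun w => c (u1 w)) z)
                (pdT (fun w => c (u2 w)) z) M := by
      have h := ((hasDerivAt_ex3 M (dT ρ0 hρ0) (dT ρ1 hρ1) (dT ρ2 hρ2)).mul
        (hasDerivAt_ex3 M (dT _ hcu0) (dT _ hcu1) (dT _ hcu2))).deriv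
      have hfun : (fun s : ℝ => expand ρ0 ρ1 ρ2 M (z.1, s) * c (expandV u0 u1 u2 M (z.1, s)))
          = fun s : ℝ => ex3 (ρ0 (z.1, s)) (ρ1 (z.1, s)) (ρ2 (z.1, s)) M
              * ex3 (c (u0 (z.1, s))) (c (u1 (z.1, s))) (c (u2 (z.1, s))) M := by
        funext s
        simp [expand, expandV, ex3, map_add, map_smul, smul_eq_mul]
      show deriv (fun s : ℝ => expand ρ0 ρ1 ρ2 M (z.1, s)
        * c (expandV u0 u1 u2 M (z.1, s))) z.2 = _
      rw [hfun]
      exact h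
    have hX :
        pdX (fun w => expand ρ0 ρ1 ρ2 M w * c (expandV u0 u1 u2 M w)
            * (expandV u0 u1 u2 M w).1) z
        = (ex3 (pdX ρ0 z) (pdX ρ1 z) (pdX ρ2 z) M * ex3 (c (u0 z)) (c (u1 z)) (c (u2 z)) M
            + ex3 (ρ0 z) (ρ1 z) (ρ2 z) M
              * ex3 (pdX (fun w => c (u0 w)) z) (pdX (fun w => c (u1 w)) z)
                  (pdX (fun w => c (u2 w)) z) M)
            * ex3 ((u0 z).1) ((u1 z).1) ((u2 z).1) M
          + ex3 (ρ0 z) (ρ1 z) (ρ2 z) M * ex3 (c (u0 z)) (c (u1 z)) (c (u2 z)) M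
            * ex3 (pdX (fun w => (u0 w).1) z) (pdX (fun w => (u1 w).1) z)
                (pdX (fun w => (u2 w).1) z) M := by
      have h := (((hasDerivAt_ex3 M (dX ρ0 hρ0) (dX ρ1 hρ1) (dX ρ2 hρ2)).mul
        (hasDerivAt_ex3 M (dX _ hcu0) (dX _ hcu1) (dX _ hcu2))).mul
        (hasDerivAt_ex3 M (dX _ hU0) (dX _ hU1) (dX _ hU2))).deriv
      have hfun : (fun s : ℝ => expand ρ0 ρ1 ρ2 M ((s, z.1.2), z.2)
            * c (expandV u0 u1 u2 M ((s, z.1.2), z.2))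
            * (expandV u0 u1 u2 M ((s, z.1.2), z.2)).1)
          = fun s : ℝ => ex3 (ρ0 ((s, z.1.2), z.2)) (ρ1 ((s, z.1.2), z.2))
                (ρ2 ((s, z.1.2), z.2)) M
              * ex3 (c (u0 ((s, z.1.2), z.2))) (c (u1 ((s, z.1.2), z.2)))
                  (c (u2 ((s, z.1.2), z.2))) M
              * ex3 ((u0 ((s, z.1.2), z.2)).1) ((u1 ((s, z.1.2), z.2)).1)
                  ((u2 ((s, z.1.2), z.2)).1) M := by
        funext s
        simp [expand, expandV, ex3, map_add, map_smul, smul_eq_mul, Prod.fst_add, Prod.smul_fst]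
      show deriv (fun s : ℝ => expand ρ0 ρ1 ρ2 M ((s, z.1.2), z.2)
        * c (expandV u0 u1 u2 M ((s, z.1.2), z.2))
        * (expandV u0 u1 u2 M ((s, z.1.2), z.2)).1) z.1.1 = _
      rw [hfun]
      exact h
    have hY :
        pdY (fun w => expand ρ0 ρ1 ρ2 M w * c (expandV u0 u1 u2 M w)
            * (expandV u0 u1 u2 M w).2) z
        = (ex3 (pdY ρ0 z) (pdY ρ1 z) (pdY ρ2 z) M * ex3 (c (u0 z)) (c (u1 z)) (c (u2 z)) M
            + ex3 (ρ0 z) (ρ1 z) (ρ2 z) M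
              * ex3 (pdY (fun w => c (u0 w)) z) (pdY (fun w => c (u1 w)) z)
                  (pdY (fun w => c (u2 w)) z) M)
            * ex3 ((u0 z).2) ((u1 z).2) ((u2 z).2) M
          + ex3 (ρ0 z) (ρ1 z) (ρ2 z) M * ex3 (c (u0 z)) (c (u1 z)) (c (u2 z)) M
            * ex3 (pdY (fun w => (u0 w).2) z) (pdY (fun w => (u1 w).2) z)
                (pdY (fun w => (u2 w).2) z) M := by
      have h := (((hasDerivAt_ex3 M (dY ρ0 hρ0) (dY ρ1 hρ1) (dY ρ2 hρ2)).mul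
        (hasDerivAt_ex3 M (dY _ hcu0) (dY _ hcu1) (dY _ hcu2))).mul
        (hasDerivAt_ex3 M (dY _ hV0) (dY _ hV1) (dY _ hV2))).deriv
      have hfun : (fun s : ℝ => expand ρ0 ρ1 ρ2 M ((z.1.1, s), z.2)
            * c (expandV u0 u1 u2 M ((z.1.1, s), z.2))
            * (expandV u0 u1 u2 M ((z.1.1, s), z.2)).2)
          = fun s : ℝ => ex3 (ρ0 ((z.1.1, s), z.2)) (ρ1 ((z.1.1, s), z.2))
                (ρ2 ((z.1.1, s), z.2)) M
              * ex3 (c (u0 ((z.1.1, s), z.2))) (c (u1 ((z.1.1, s), z.2)))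
                  (c (u2 ((z.1.1, s), z.2))) M
              * ex3 ((u0 ((z.1.1, s), z.2)).2) ((u1 ((z.1.1, s), z.2)).2)
                  ((u2 ((z.1.1, s), z.2)).2) M := by
        funext s
        simp [expand, expandV, ex3, map_add, map_smul, smul_eq_mul, Prod.snd_add, Prod.smul_snd]
      show deriv (fun s : ℝ => expand ρ0 ρ1 ρ2 M ((z.1.1, s), z.2)
        * c (expandV u0 u1 u2 M ((z.1.1, s), z.2))
        * (expandV u0 u1 u2 M ((z.1.1, s), z.2)).2) z.1.2 = _
      rw [hfun]
      exact h
    rw [hT, hX, hY]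

/-- If the expanded fields satisfy the non-dimensional mixture momentum equation for
every Mach number `M ∈ (0, ε)`, then `p⁰` and `p¹` depend on time only, so that
`p_M(x, t) = P⁰(t) + M P¹(t) + M² p²(x, t)`: spatial pressure fluctuations are `O(M²)`. -/
theorem pressure_fluctuations_order_M_sq
    (ε : ℝ) (hε : 0 < ε)
    (ρ0 ρ1 ρ2 p0 p1 p2 : SpaceTime → ℝ) (u0 u1 u2 : SpaceTime → ℝ × ℝ)
    (hρ0 : ContDiff ℝ 1 ρ0) (hρ1 : ContDiff ℝ 1 ρ1) (hρ2 : ContDiff ℝ 1 ρ2)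
    (hp0 : ContDiff ℝ 1 p0) (hp1 : ContDiff ℝ 1 p1) (hp2 : ContDiff ℝ 1 p2)
    (hu0 : ContDiff ℝ 1 u0) (hu1 : ContDiff ℝ 1 u1) (hu2 : ContDiff ℝ 1 u2)
    (hmom : ∀ M : ℝ, M ∈ Set.Ioo 0 ε →
      MomentumEq (expand ρ0 ρ1 ρ2 M) (expand p0 p1 p2 M) (expandV u0 u1 u2 M) M) :
    ∃ P0 P1 : ℝ → ℝ,
      (∀ z : SpaceTime, p0 z = P0 z.2 ∧ p1 z = P1 z.2) ∧
      (∀ M : ℝ, ∀ z : SpaceTime,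
        expand p0 p1 p2 M z = P0 z.2 + M * P1 z.2 + M ^ 2 * p2 z) := by
  have key : ∀ z : SpaceTime,
      (pdX p0 z = 0 ∧ pdX p1 z = 0) ∧ (pdY p0 z = 0 ∧ pdY p1 z = 0) := by
    intro z
    constructor
    · -- x-direction, from the first momentum component
      obtain ⟨E, hEc, hE⟩ := exists_E ρ0 ρ1 ρ2 u0 u1 u2 hρ0 hρ1 hρ2 hu0 hu1 hu2
        (ContinuousLinearMap.fst ℝ ℝ ℝ) z
      refine coeffs_zero (h := fun M => pdX p2 z + E M) (by fun_prop) hε ?_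
      intro M hM
      have hM0 : M ≠ 0 := ne_of_gt hM.1
      have hx := (hmom M hM z).1
      have hx' : E M + (1 / M ^ 2) * pdX (expand p0 p1 p2 M) z = 0 := by
        rw [← hE M]; exact hx
      have hpx : pdX (expand p0 p1 p2 M) z
          = ex3 (pdX p0 z) (pdX p1 z) (pdX p2 z) M :=
        (hasDerivAt_ex3 M (hasDerivAt_pdX p0 hp0 z) (hasDerivAt_pdX p1 hp1 z)
          (hasDerivAt_pdX p2 hp2 z)).deriv
      rw [hpx] at hx'
      have h2 : (M:ℝ) ^ 2 ≠ 0 := pow_ne_zero 2 hM0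
      have key2 : ex3 (pdX p0 z) (pdX p1 z) (pdX p2 z) M = -(M ^ 2) * E M := by
        field_simp at hx'
        linarith
      simp only [ex3] at key2
      show pdX p0 z + M * (pdX p1 z + M * (pdX p2 z + E M)) = 0
      linear_combination key2
    · -- y-direction, from the second momentum component
      obtain ⟨E, hEc, hE⟩ := exists_E ρ0 ρ1 ρ2 u0 u1 u2 hρ0 hρ1 hρ2 hu0 hu1 hu2
        (ContinuousLinearMap.snd ℝ ℝ ℝ) z
      refine coeffs_zero (h := fun M => pdY p2 z + E M) (by fun_prop) hε ?_
      intro M hM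
      have hM0 : M ≠ 0 := ne_of_gt hM.1
      have hx := (hmom M hM z).2
      have hx' : E M + (1 / M ^ 2) * pdY (expand p0 p1 p2 M) z = 0 := by
        rw [← hE M]; exact hx
      have hpx : pdY (expand p0 p1 p2 M) z
          = ex3 (pdY p0 z) (pdY p1 z) (pdY p2 z) M :=
        (hasDerivAt_ex3 M (hasDerivAt_pdY p0 hp0 z) (hasDerivAt_pdY p1 hp1 z)
          (hasDerivAt_pdY p2 hp2 z)).deriv
      rw [hpx] at hx'
      have h2 : (M:ℝ) ^ 2 ≠ 0 := pow_ne_zero 2 hM0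
      have key2 : ex3 (pdY p0 z) (pdY p1 z) (pdY p2 z) M = -(M ^ 2) * E M := by
        field_simp at hx'
        linarith
      simp only [ex3] at key2
      show pdY p0 z + M * (pdY p1 z + M * (pdY p2 z + E M)) = 0
      linear_combination key2
  have const : ∀ q : SpaceTime → ℝ, ContDiff ℝ 1 q → (∀ z, pdX q z = 0) →
      (∀ z, pdY q z = 0) → ∀ z : SpaceTime, q z = q ((0, 0), z.2) := by
    intro q hq hx hy z
    have hdX : Differentiable ℝ (fun s : ℝ => q ((s, z.1.2), z.2)) := fun s =>
      ((hq.differentiable one_ne_zero) ((s, z.1.2), z.2)).comp s (by fun_prop)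
    have h1 : q ((z.1.1, z.1.2), z.2) = q ((0, z.1.2), z.2) :=
      is_const_of_deriv_eq_zero hdX (fun s => hx ((s, z.1.2), z.2)) z.1.1 0
    have hdY : Differentiable ℝ (fun s : ℝ => q ((0, s), z.2)) := fun s =>
      ((hq.differentiable one_ne_zero) (((0:ℝ), s), z.2)).comp s (by fun_prop)
    have h2 : q ((0, z.1.2), z.2) = q ((0, 0), z.2) :=
      is_const_of_deriv_eq_zero hdY (fun s => hy (((0:ℝ), s), z.2)) z.1.2 0
    exact h1.trans h2
  have hc0 : ∀ z : SpaceTime, p0 z = p0 ((0, 0), z.2) :=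
    const p0 hp0 (fun z => (key z).1.1) (fun z => (key z).2.1)
  have hc1 : ∀ z : SpaceTime, p1 z = p1 ((0, 0), z.2) :=
    const p1 hp1 (fun z => (key z).1.2) (fun z => (key z).2.2)
  refine ⟨fun t => p0 ((0, 0), t), fun t => p1 ((0, 0), t),
    fun z => ⟨hc0 z, hc1 z⟩, ?_⟩
  intro M z
  simp only [expand]
  rw [hc0 z, hc1 z]
end

section
/- Let ε > 0 and, for j = 1, 2, let α_j⁰, α_j¹, α_j², m_j⁰, m_j¹, m_j², e_j⁰, e_j¹, e_j², p_j⁰, p_j¹, p_j², together with ρ⁰, ρ¹, ρ², p⁰, p¹, p², E⁰, E¹, E² : ℝ² × ℝ → ℝ and u⁰, u¹, u² : ℝ² × ℝ → ℝ², all be continuously differentiable, and write φ_M = φ⁰ + M φ¹ + M² φ² for each field φ. Suppose that for every M ∈ (0, ε) the expanded fields satisfy, at every point of ℝ² × ℝ, the non-dimensional six-equation system: (i) ∂_t α_{1,M} + u_M · ∇α_{1,M} = 0; (ii) ∂_t m_{j,M} + div(m_{j,M} u_M) = 0 for j = 1, 2; (iii) ∂_t(ρ_M u_M) + div(ρ_M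 u_M ⊗ u_M) + (1/M²) ∇p_M = 0; (iv) ∂_t(ρ_M E_M) + div((ρ_M E_M + p_M) u_M) = 0; (v) ∂_t(m_{j,M} e_{j,M}) + div(m_{j,M} e_{j,M} u_M) + α_{j,M} p_{j,M} div u_M = 0 for j = 1, 2. Then the leading-order fields satisfy the limit system: ∂_t α_1⁰ + u⁰ · ∇α_1⁰ = 0; ∂_t m_j⁰ + div(m_j⁰ u⁰) = 0; ∂_t(ρ⁰ u⁰) + div(ρ⁰ u⁰ ⊗ u⁰) + ∇p² = 0; ∂_t(ρ⁰ E⁰) + div((ρ⁰ E⁰ + p⁰) u⁰) = 0; and ∂_t(m_j⁰ e_j⁰) + div(m_j⁰ e_j⁰ u⁰) + α_j⁰ p_j⁰ div u⁰ = 0 for j = 1, 2. -/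
/-- The (homogeneous) six-equation diffuse-interface system, written componentwise.
Here `α1` is the volume fraction of phase 1, `m1, m2` the partial densities
`α_j ρ_j`, `e1, e2` the phasic specific internal energies, `pp1, pp2` the phasic
pressures, `ρ` the mixture density, `pEng` the mixture pressure appearing in the
total-energy equation, `pMom` the pressure whose gradient appears in the momentum
equation with coefficient `c` (for the non-dimensional system `pMom` is the mixture
pressure and `c = 1/M²`; for the limit system `pMom = p²` and `c = 1`), `E` the
specific mixture total energy and `u` the velocity. -/
def SixEqSystem (α1 α2 m1 m2 e1 e2 pp1 pp2 ρ pEng pMom E : SpaceTime → ℝ)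
    (u : SpaceTime → ℝ × ℝ) (c : ℝ) : Prop :=
  ∀ z : SpaceTime,
    -- (i) volume fraction advection: ∂ₜα₁ + u·∇α₁ = 0
    (pdT α1 z + (u z).1 * pdX α1 z + (u z).2 * pdY α1 z = 0)
    ∧
    -- (ii) partial-density (phasic mass) conservation: ∂ₜm_j + div(m_j u) = 0
    (pdT m1 z + pdX (fun w => m1 w * (u w).1) z + pdY (fun w => m1 w * (u w).2) z = 0)
    ∧
    (pdT m2 z + pdX (fun w => m2 w * (u w).1) z + pdY (fun w => m2 w * (u w).2) z = 0)
    ∧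
    -- (iii) mixture momentum: ∂ₜ(ρu) + div(ρ u ⊗ u) + c ∇pMom = 0
    (pdT (fun w => ρ w * (u w).1) z
      + pdX (fun w => ρ w * (u w).1 * (u w).1) z
      + pdY (fun w => ρ w * (u w).1 * (u w).2) z
      + c * pdX pMom z = 0)
    ∧
    (pdT (fun w => ρ w * (u w).2) z
      + pdX (fun w => ρ w * (u w).2 * (u w).1) z
      + pdY (fun w => ρ w * (u w).2 * (u w).2) z
      + c * pdY pMom z = 0)
    ∧
    -- (iv) mixture total energy: ∂ₜ(ρE) + div((ρE + p) u) = 0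
    (pdT (fun w => ρ w * E w) z
      + pdX (fun w => (ρ w * E w + pEng w) * (u w).1) z
      + pdY (fun w => (ρ w * E w + pEng w) * (u w).2) z = 0)
    ∧
    -- (v) phasic internal energies:
    -- ∂ₜ(m_j e_j) + div(m_j e_j u) + α_j p_j div u = 0, j = 1, 2
    (pdT (fun w => m1 w * e1 w) z
      + pdX (fun w => m1 w * e1 w * (u w).1) z
      + pdY (fun w => m1 w * e1 w * (u w).2) z
      + α1 z * pp1 z * (pdX (fun w => (u w).1) z + pdY (fun w => (u w).2) z) = 0)
    ∧
    (pdT (fun w => m2 w * e2 w) z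
      + pdX (fun w => m2 w * e2 w * (u w).1) z
      + pdY (fun w => m2 w * e2 w * (u w).2) z
      + α2 z * pp2 z * (pdX (fun w => (u w).1) z + pdY (fun w => (u w).2) z) = 0)



section LowMachHelpers

/-- `D` is the derivative along a differentiable curve through `z`. -/
def IsLineDeriv (D : (SpaceTime → ℝ) → ℝ) (z : SpaceTime) : Prop :=
  ∃ L : ℝ → SpaceTime, ∃ s : ℝ, Differentiable ℝ L ∧ L s = z ∧
    ∀ f : SpaceTime → ℝ, D f = deriv (fun t => f (L t)) s

lemma isLineDeriv_pdX (z : SpaceTime) : IsLineDeriv (fun f => pdX f z) z :=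
  ⟨fun s => ((s, z.1.2), z.2), z.1.1, by fun_prop, rfl, fun f => rfl⟩

lemma isLineDeriv_pdY (z : SpaceTime) : IsLineDeriv (fun f => pdY f z) z :=
  ⟨fun s => ((z.1.1, s), z.2), z.1.2, by fun_prop, rfl, fun f => rfl⟩

lemma isLineDeriv_pdT (z : SpaceTime) : IsLineDeriv (fun f => pdT f z) z :=
  ⟨fun s => (z.1, s), z.2, by fun_prop, rfl, fun f => rfl⟩

lemma diff_expand {f0 f1 f2 : SpaceTime → ℝ} (h0 : Differentiable ℝ f0)
    (h1 : Differentiable ℝ f1) (h2 : Differentiable ℝ f2) (M : ℝ) :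
    Differentiable ℝ (expand f0 f1 f2 M) :=
  (h0.add (h1.const_mul M)).add (h2.const_mul (M ^ 2))

namespace IsLineDeriv

variable {D : (SpaceTime → ℝ) → ℝ} {z : SpaceTime}

lemma add (hD : IsLineDeriv D z) {f g : SpaceTime → ℝ}
    (hf : Differentiable ℝ f) (hg : Differentiable ℝ g) :
    D (fun w => f w + g w) = D f + D g := by
  obtain ⟨L, s, hL, rfl, hDf⟩ := hD
  rw [hDf, hDf, hDf]
  exact deriv_add ((hf.comp hL).differentiableAt) ((hg.comp hL).differentiableAt)

lemma mul (hD : IsLineDeriv D z) {f g : SpaceTime → ℝ}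
    (hf : Differentiable ℝ f) (hg : Differentiable ℝ g) :
    D (fun w => f w * g w) = D f * g z + f z * D g := by
  obtain ⟨L, s, hL, rfl, hDf⟩ := hD
  rw [hDf, hDf, hDf]
  exact deriv_mul ((hf.comp hL).differentiableAt) ((hg.comp hL).differentiableAt)

lemma const_mul (hD : IsLineDeriv D z) (c : ℝ) {f : SpaceTime → ℝ}
    (hf : Differentiable ℝ f) :
    D (fun w => c * f w) = c * D f := by
  obtain ⟨L, s, hL, rfl, hDf⟩ := hD
  rw [hDf, hDf]
  exact deriv_const_mul c ((hf.comp hL).differentiableAt)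

lemma expand' (hD : IsLineDeriv D z) {f0 f1 f2 : SpaceTime → ℝ}
    (h0 : Differentiable ℝ f0) (h1 : Differentiable ℝ f1) (h2 : Differentiable ℝ f2)
    (M : ℝ) :
    D (expand f0 f1 f2 M) = D f0 + M * D f1 + M ^ 2 * D f2 := by
  have e : expand f0 f1 f2 M = fun w => (f0 w + M * f1 w) + M ^ 2 * f2 w := rfl
  rw [e]
  rw [hD.add (f := fun w => f0 w + M * f1 w) (h0.add (h1.const_mul M)) (h2.const_mul (M ^ 2)),
      hD.add h0 (h1.const_mul M), hD.const_mul M h1, hD.const_mul (M ^ 2) h2]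

lemma expand2 (hD : IsLineDeriv D z) {f0 f1 f2 g0 g1 g2 : SpaceTime → ℝ}
    (hf0 : Differentiable ℝ f0) (hf1 : Differentiable ℝ f1) (hf2 : Differentiable ℝ f2)
    (hg0 : Differentiable ℝ g0) (hg1 : Differentiable ℝ g1) (hg2 : Differentiable ℝ g2)
    (M : ℝ) :
    D (fun w => expand f0 f1 f2 M w * expand g0 g1 g2 M w)
      = (D f0 + M * D f1 + M ^ 2 * D f2) * expand g0 g1 g2 M z
        + expand f0 f1 f2 M z * (D g0 + M * D g1 + M ^ 2 * D g2) := by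
  rw [hD.mul (diff_expand hf0 hf1 hf2 M) (diff_expand hg0 hg1 hg2 M),
      hD.expand' hf0 hf1 hf2 M, hD.expand' hg0 hg1 hg2 M]

lemma expand3 (hD : IsLineDeriv D z) {f0 f1 f2 g0 g1 g2 h0 h1 h2 : SpaceTime → ℝ}
    (hf0 : Differentiable ℝ f0) (hf1 : Differentiable ℝ f1) (hf2 : Differentiable ℝ f2)
    (hg0 : Differentiable ℝ g0) (hg1 : Differentiable ℝ g1) (hg2 : Differentiable ℝ g2)
    (hh0 : Differentiable ℝ h0) (hh1 : Differentiable ℝ h1) (hh2 : Differentiable ℝ h2)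
    (M : ℝ) :
    D (fun w => expand f0 f1 f2 M w * expand g0 g1 g2 M w * expand h0 h1 h2 M w)
      = ((D f0 + M * D f1 + M ^ 2 * D f2) * expand g0 g1 g2 M z
          + expand f0 f1 f2 M z * (D g0 + M * D g1 + M ^ 2 * D g2))
            * expand h0 h1 h2 M z
        + expand f0 f1 f2 M z * expand g0 g1 g2 M z
            * (D h0 + M * D h1 + M ^ 2 * D h2) := by
  have e := hD.mul (f := fun w => expand f0 f1 f2 M w * expand g0 g1 g2 M w)
    ((diff_expand hf0 hf1 hf2 M).mul (diff_expand hg0 hg1 hg2 M))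
    (diff_expand hh0 hh1 hh2 M)
  simp only [e, hD.expand2 hf0 hf1 hf2 hg0 hg1 hg2 M, hD.expand' hh0 hh1 hh2 M]

lemma expand21 (hD : IsLineDeriv D z) {f0 f1 f2 g0 g1 g2 p0 p1 p2 h0 h1 h2 : SpaceTime → ℝ}
    (hf0 : Differentiable ℝ f0) (hf1 : Differentiable ℝ f1) (hf2 : Differentiable ℝ f2)
    (hg0 : Differentiable ℝ g0) (hg1 : Differentiable ℝ g1) (hg2 : Differentiable ℝ g2)
    (hp0 : Differentiable ℝ p0) (hp1 : Differentiable ℝ p1) (hp2 : Differentiable ℝ p2)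
    (hh0 : Differentiable ℝ h0) (hh1 : Differentiable ℝ h1) (hh2 : Differentiable ℝ h2)
    (M : ℝ) :
    D (fun w => (expand f0 f1 f2 M w * expand g0 g1 g2 M w + expand p0 p1 p2 M w)
          * expand h0 h1 h2 M w)
      = ((D f0 + M * D f1 + M ^ 2 * D f2) * expand g0 g1 g2 M z
          + expand f0 f1 f2 M z * (D g0 + M * D g1 + M ^ 2 * D g2)
          + (D p0 + M * D p1 + M ^ 2 * D p2)) * expand h0 h1 h2 M z
        + (expand f0 f1 f2 M z * expand g0 g1 g2 M z + expand p0 p1 p2 M z)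
            * (D h0 + M * D h1 + M ^ 2 * D h2) := by
  have e := hD.mul
    (f := fun w => expand f0 f1 f2 M w * expand g0 g1 g2 M w + expand p0 p1 p2 M w)
    (((diff_expand hf0 hf1 hf2 M).mul (diff_expand hg0 hg1 hg2 M)).add
    (diff_expand hp0 hp1 hp2 M)) (diff_expand hh0 hh1 hh2 M)
  have e2 := hD.add (f := fun w => expand f0 f1 f2 M w * expand g0 g1 g2 M w)
    ((diff_expand hf0 hf1 hf2 M).mul (diff_expand hg0 hg1 hg2 M))
    (diff_expand hp0 hp1 hp2 M)
  simp only [e, e2, hD.expand2 hf0 hf1 hf2 hg0 hg1 hg2 M, hD.expand' hp0 hp1 hp2 M,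
    hD.expand' hh0 hh1 hh2 M]

end IsLineDeriv

lemma expandV_fst_apply (u0 u1 u2 : SpaceTime → ℝ × ℝ) (M : ℝ) (z : SpaceTime) :
    (expandV u0 u1 u2 M z).1
      = expand (fun w => (u0 w).1) (fun w => (u1 w).1) (fun w => (u2 w).1) M z := by
  simp [expandV, expand, smul_eq_mul]

lemma expandV_snd_apply (u0 u1 u2 : SpaceTime → ℝ × ℝ) (M : ℝ) (z : SpaceTime) :
    (expandV u0 u1 u2 M z).2
      = expand (fun w => (u0 w).2) (fun w => (u1 w).2) (fun w => (u2 w).2) M z := by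
  simp [expandV, expand, smul_eq_mul]

lemma vanish_at_zero {ε : ℝ} (hε : 0 < ε) {g : ℝ → ℝ}
    (h : ∀ M ∈ Set.Ioo (0:ℝ) ε, g M = 0) (hg : Continuous g) : g 0 = 0 := by
  have h0 : (0:ℝ) ∈ closure (Set.Ioo (0:ℝ) ε) := by
    rw [closure_Ioo hε.ne]; exact ⟨le_refl 0, hε.le⟩
  have hne : (nhdsWithin (0:ℝ) (Set.Ioo (0:ℝ) ε)).NeBot :=
    mem_closure_iff_nhdsWithin_neBot.mp h0
  have h1 : Filter.Tendsto g (nhdsWithin 0 (Set.Ioo (0:ℝ) ε)) (nhds (g 0)) :=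
    hg.continuousAt.continuousWithinAt
  have h2 : Filter.Tendsto g (nhdsWithin 0 (Set.Ioo (0:ℝ) ε)) (nhds 0) := by
    refine Filter.Tendsto.congr' ?_ tendsto_const_nhds
    filter_upwards [self_mem_nhdsWithin] with x hx
    exact (h x hx).symm
  exact tendsto_nhds_unique h1 h2

lemma momentum_extract {ε : ℝ} (hε : 0 < ε) (A B C : ℝ) {T : ℝ → ℝ}
    (h : ∀ M ∈ Set.Ioo (0:ℝ) ε, T M + 1 / M ^ 2 * (A + M * B + M ^ 2 * C) = 0)
    (hT : Continuous T) : T 0 + C = 0 := by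
  have hQ : ∀ M ∈ Set.Ioo (0:ℝ) ε, M ^ 2 * T M + A + M * B + M ^ 2 * C = 0 := by
    intro M hM
    have hM0 : M ≠ 0 := ne_of_gt hM.1
    have hh := h M hM
    field_simp [hM0] at hh
    linear_combination hh
  have hA : A = 0 := by
    have h0 := vanish_at_zero hε hQ (by fun_prop)
    norm_num at h0
    exact h0
  have hQ1 : ∀ M ∈ Set.Ioo (0:ℝ) ε, M * T M + B + M * C = 0 := by
    intro M hM
    have hM0 : M ≠ 0 := ne_of_gt hM.1
    have e : M * (M * T M + B + M * C) = M * 0 := by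
      rw [mul_zero]; linear_combination hQ M hM - hA
    exact mul_left_cancel₀ hM0 e
  have hB : B = 0 := by
    have h0 := vanish_at_zero hε hQ1 (by fun_prop)
    norm_num at h0
    exact h0
  have hQ2 : ∀ M ∈ Set.Ioo (0:ℝ) ε, T M + C = 0 := by
    intro M hM
    have hM0 : M ≠ 0 := ne_of_gt hM.1
    have e : M * (T M + C) = M * 0 := by
      rw [mul_zero]; linear_combination hQ1 M hM - hB
    exact mul_left_cancel₀ hM0 e
  exact vanish_at_zero hε hQ2 (by fun_prop)

end LowMachHelpers

set_option maxHeartbeats 1600000 in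
/-- If the expanded fields satisfy the non-dimensional six-equation system for every
Mach number `M ∈ (0, ε)`, then the leading-order fields satisfy the limit system in
which the momentum equation carries the gradient of the second-order pressure `p²`. -/
theorem sixEq_low_mach_limit
    (ε : ℝ) (hε : 0 < ε)
    (a10 a11 a12 a20 a21 a22 : SpaceTime → ℝ)   -- volume fractions α₁, α₂
    (m10 m11 m12 m20 m21 m22 : SpaceTime → ℝ)   -- partial densities m₁, m₂
    (e10 e11 e12 e20 e21 e22 : SpaceTime → ℝ)   -- phasic internal energies e₁, e₂
    (q10 q11 q12 q20 q21 q22 : SpaceTime → ℝ)   -- phasic pressures p₁, p₂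
    (r0 r1 r2 : SpaceTime → ℝ)                  -- mixture density ρ
    (P0 P1 P2 : SpaceTime → ℝ)                  -- mixture pressure p
    (En0 En1 En2 : SpaceTime → ℝ)               -- specific mixture total energy E
    (u0 u1 u2 : SpaceTime → ℝ × ℝ)              -- velocity u
    (ha10 : ContDiff ℝ 1 a10) (ha11 : ContDiff ℝ 1 a11) (ha12 : ContDiff ℝ 1 a12)
    (ha20 : ContDiff ℝ 1 a20) (ha21 : ContDiff ℝ 1 a21) (ha22 : ContDiff ℝ 1 a22)
    (hm10 : ContDiff ℝ 1 m10) (hm11 : ContDiff ℝ 1 m11) (hm12 : ContDiff ℝ 1 m12)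
    (hm20 : ContDiff ℝ 1 m20) (hm21 : ContDiff ℝ 1 m21) (hm22 : ContDiff ℝ 1 m22)
    (he10 : ContDiff ℝ 1 e10) (he11 : ContDiff ℝ 1 e11) (he12 : ContDiff ℝ 1 e12)
    (he20 : ContDiff ℝ 1 e20) (he21 : ContDiff ℝ 1 e21) (he22 : ContDiff ℝ 1 e22)
    (hq10 : ContDiff ℝ 1 q10) (hq11 : ContDiff ℝ 1 q11) (hq12 : ContDiff ℝ 1 q12)
    (hq20 : ContDiff ℝ 1 q20) (hq21 : ContDiff ℝ 1 q21) (hq22 : ContDiff ℝ 1 q22)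
    (hr0 : ContDiff ℝ 1 r0) (hr1 : ContDiff ℝ 1 r1) (hr2 : ContDiff ℝ 1 r2)
    (hP0 : ContDiff ℝ 1 P0) (hP1 : ContDiff ℝ 1 P1) (hP2 : ContDiff ℝ 1 P2)
    (hEn0 : ContDiff ℝ 1 En0) (hEn1 : ContDiff ℝ 1 En1) (hEn2 : ContDiff ℝ 1 En2)
    (hu0 : ContDiff ℝ 1 u0) (hu1 : ContDiff ℝ 1 u1) (hu2 : ContDiff ℝ 1 u2)
    (hsys : ∀ M : ℝ, M ∈ Set.Ioo 0 ε →
      SixEqSystem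
        (expand a10 a11 a12 M) (expand a20 a21 a22 M)
        (expand m10 m11 m12 M) (expand m20 m21 m22 M)
        (expand e10 e11 e12 M) (expand e20 e21 e22 M)
        (expand q10 q11 q12 M) (expand q20 q21 q22 M)
        (expand r0 r1 r2 M)
        (expand P0 P1 P2 M) (expand P0 P1 P2 M)
        (expand En0 En1 En2 M)
        (expandV u0 u1 u2 M) (1 / M ^ 2)) :
    SixEqSystem a10 a20 m10 m20 e10 e20 q10 q20 r0 P0 P2 En0 u0 1 := by
  intro z
  have hDx : IsLineDeriv (fun f => pdX f z) z := isLineDeriv_pdX z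
  have hDy : IsLineDeriv (fun f => pdY f z) z := isLineDeriv_pdY z
  have hDt : IsLineDeriv (fun f => pdT f z) z := isLineDeriv_pdT z
  have da10 : Differentiable ℝ a10 := ha10.differentiable one_ne_zero
  have da11 : Differentiable ℝ a11 := ha11.differentiable one_ne_zero
  have da12 : Differentiable ℝ a12 := ha12.differentiable one_ne_zero
  have da20 : Differentiable ℝ a20 := ha20.differentiable one_ne_zero
  have da21 : Differentiable ℝ a21 := ha21.differentiable one_ne_zero
  have da22 : Differentiable ℝ a22 := ha22.differentiable one_ne_zero
  have dm10 : Differentiable ℝ m10 := hm10.differentiable one_ne_zero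
  have dm11 : Differentiable ℝ m11 := hm11.differentiable one_ne_zero
  have dm12 : Differentiable ℝ m12 := hm12.differentiable one_ne_zero
  have dm20 : Differentiable ℝ m20 := hm20.differentiable one_ne_zero
  have dm21 : Differentiable ℝ m21 := hm21.differentiable one_ne_zero
  have dm22 : Differentiable ℝ m22 := hm22.differentiable one_ne_zero
  have de10 : Differentiable ℝ e10 := he10.differentiable one_ne_zero
  have de11 : Differentiable ℝ e11 := he11.differentiable one_ne_zero
  have de12 : Differentiable ℝ e12 := he12.differentiable one_ne_zero
  have de20 : Differentiable ℝ e20 := he20.differentiable one_ne_zero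
  have de21 : Differentiable ℝ e21 := he21.differentiable one_ne_zero
  have de22 : Differentiable ℝ e22 := he22.differentiable one_ne_zero
  have dr0 : Differentiable ℝ r0 := hr0.differentiable one_ne_zero
  have dr1 : Differentiable ℝ r1 := hr1.differentiable one_ne_zero
  have dr2 : Differentiable ℝ r2 := hr2.differentiable one_ne_zero
  have dP0 : Differentiable ℝ P0 := hP0.differentiable one_ne_zero
  have dP1 : Differentiable ℝ P1 := hP1.differentiable one_ne_zero
  have dP2 : Differentiable ℝ P2 := hP2.differentiable one_ne_zero
  have dEn0 : Differentiable ℝ En0 := hEn0.differentiable one_ne_zero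
  have dEn1 : Differentiable ℝ En1 := hEn1.differentiable one_ne_zero
  have dEn2 : Differentiable ℝ En2 := hEn2.differentiable one_ne_zero
  have du0x : Differentiable ℝ (fun w => (u0 w).1) := (hu0.differentiable one_ne_zero).fst
  have du1x : Differentiable ℝ (fun w => (u1 w).1) := (hu1.differentiable one_ne_zero).fst
  have du2x : Differentiable ℝ (fun w => (u2 w).1) := (hu2.differentiable one_ne_zero).fst
  have du0y : Differentiable ℝ (fun w => (u0 w).2) := (hu0.differentiable one_ne_zero).snd
  have du1y : Differentiable ℝ (fun w => (u1 w).2) := (hu1.differentiable one_ne_zero).snd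
  have du2y : Differentiable ℝ (fun w => (u2 w).2) := (hu2.differentiable one_ne_zero).snd
  refine ⟨?_, ?_, ?_, ?_, ?_, ?_, ?_, ?_⟩
  · -- (i) volume fraction
    have h := fun M (hM : M ∈ Set.Ioo 0 ε) => ((hsys M hM) z).1
    simp only [expandV_fst_apply, expandV_snd_apply,
      hDt.expand' da10 da11 da12, hDx.expand' da10 da11 da12,
      hDy.expand' da10 da11 da12] at h
    have h0 := vanish_at_zero hε h (by simp only [expand]; fun_prop)
    norm_num [expand] at h0
    linear_combination h0
  · -- (ii) mass 1
    have h := fun M (hM : M ∈ Set.Ioo 0 ε) => ((hsys M hM) z).2.1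
    simp only [expandV_fst_apply, expandV_snd_apply,
      hDt.expand' dm10 dm11 dm12,
      hDx.expand2 dm10 dm11 dm12 du0x du1x du2x,
      hDy.expand2 dm10 dm11 dm12 du0y du1y du2y] at h
    have h0 := vanish_at_zero hε h (by simp only [expand]; fun_prop)
    norm_num [expand] at h0
    simp only [hDx.mul dm10 du0x, hDy.mul dm10 du0y]
    linear_combination h0
  · -- (ii) mass 2
    have h := fun M (hM : M ∈ Set.Ioo 0 ε) => ((hsys M hM) z).2.2.1
    simp only [expandV_fst_apply, expandV_snd_apply,
      hDt.expand' dm20 dm21 dm22,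
      hDx.expand2 dm20 dm21 dm22 du0x du1x du2x,
      hDy.expand2 dm20 dm21 dm22 du0y du1y du2y] at h
    have h0 := vanish_at_zero hε h (by simp only [expand]; fun_prop)
    norm_num [expand] at h0
    simp only [hDx.mul dm20 du0x, hDy.mul dm20 du0y]
    linear_combination h0
  · -- (iii) momentum x
    have h := fun M (hM : M ∈ Set.Ioo 0 ε) => ((hsys M hM) z).2.2.2.1
    simp only [expandV_fst_apply, expandV_snd_apply,
      hDt.expand2 dr0 dr1 dr2 du0x du1x du2x,
      hDx.expand3 dr0 dr1 dr2 du0x du1x du2x du0x du1x du2x,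
      hDy.expand3 dr0 dr1 dr2 du0x du1x du2x du0y du1y du2y,
      hDx.expand' dP0 dP1 dP2] at h
    have h0 := momentum_extract hε (pdX P0 z) (pdX P1 z) (pdX P2 z) h
      (by simp only [expand]; fun_prop)
    norm_num [expand] at h0
    simp only [hDt.mul dr0 du0x, hDx.mul (f := fun w => r0 w * (u0 w).1) (dr0.mul du0x) du0x,
      hDy.mul (f := fun w => r0 w * (u0 w).1) (dr0.mul du0x) du0y, hDx.mul dr0 du0x, hDy.mul dr0 du0x]
    linear_combination h0
  · -- (iii) momentum y
    have h := fun M (hM : M ∈ Set.Ioo 0 ε) => ((hsys M hM) z).2.2.2.2.1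
    simp only [expandV_fst_apply, expandV_snd_apply,
      hDt.expand2 dr0 dr1 dr2 du0y du1y du2y,
      hDx.expand3 dr0 dr1 dr2 du0y du1y du2y du0x du1x du2x,
      hDy.expand3 dr0 dr1 dr2 du0y du1y du2y du0y du1y du2y,
      hDy.expand' dP0 dP1 dP2] at h
    have h0 := momentum_extract hε (pdY P0 z) (pdY P1 z) (pdY P2 z) h
      (by simp only [expand]; fun_prop)
    norm_num [expand] at h0
    simp only [hDt.mul dr0 du0y, hDx.mul (f := fun w => r0 w * (u0 w).2) (dr0.mul du0y) du0x,
      hDy.mul (f := fun w => r0 w * (u0 w).2) (dr0.mul du0y) du0y, hDx.mul dr0 du0y, hDy.mul dr0 du0y]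
    linear_combination h0
  · -- (iv) total energy
    have h := fun M (hM : M ∈ Set.Ioo 0 ε) => ((hsys M hM) z).2.2.2.2.2.1
    simp only [expandV_fst_apply, expandV_snd_apply,
      hDt.expand2 dr0 dr1 dr2 dEn0 dEn1 dEn2,
      hDx.expand21 dr0 dr1 dr2 dEn0 dEn1 dEn2 dP0 dP1 dP2 du0x du1x du2x,
      hDy.expand21 dr0 dr1 dr2 dEn0 dEn1 dEn2 dP0 dP1 dP2 du0y du1y du2y] at h
    have h0 := vanish_at_zero hε h (by simp only [expand]; fun_prop)
    norm_num [expand] at h0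
    simp only [hDt.mul dr0 dEn0,
      hDx.mul (f := fun w => r0 w * En0 w + P0 w) ((dr0.mul dEn0).add dP0) du0x, hDy.mul (f := fun w => r0 w * En0 w + P0 w) ((dr0.mul dEn0).add dP0) du0y,
      hDx.add (f := fun w => r0 w * En0 w) (dr0.mul dEn0) dP0, hDy.add (f := fun w => r0 w * En0 w) (dr0.mul dEn0) dP0,
      hDx.mul dr0 dEn0, hDy.mul dr0 dEn0]
    linear_combination h0
  · -- (v) internal energy 1
    have h := fun M (hM : M ∈ Set.Ioo 0 ε) => ((hsys M hM) z).2.2.2.2.2.2.1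
    simp only [expandV_fst_apply, expandV_snd_apply,
      hDt.expand2 dm10 dm11 dm12 de10 de11 de12,
      hDx.expand3 dm10 dm11 dm12 de10 de11 de12 du0x du1x du2x,
      hDy.expand3 dm10 dm11 dm12 de10 de11 de12 du0y du1y du2y,
      hDx.expand' du0x du1x du2x, hDy.expand' du0y du1y du2y] at h
    have h0 := vanish_at_zero hε h (by simp only [expand]; fun_prop)
    norm_num [expand] at h0
    simp only [hDt.mul dm10 de10, hDx.mul (f := fun w => m10 w * e10 w) (dm10.mul de10) du0x,
      hDy.mul (f := fun w => m10 w * e10 w) (dm10.mul de10) du0y, hDx.mul dm10 de10, hDy.mul dm10 de10]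
    linear_combination h0
  · -- (v) internal energy 2
    have h := fun M (hM : M ∈ Set.Ioo 0 ε) => ((hsys M hM) z).2.2.2.2.2.2.2
    simp only [expandV_fst_apply, expandV_snd_apply,
      hDt.expand2 dm20 dm21 dm22 de20 de21 de22,
      hDx.expand3 dm20 dm21 dm22 de20 de21 de22 du0x du1x du2x,
      hDy.expand3 dm20 dm21 dm22 de20 de21 de22 du0y du1y du2y,
      hDx.expand' du0x du1x du2x, hDy.expand' du0y du1y du2y] at h
    have h0 := vanish_at_zero hε h (by simp only [expand]; fun_prop)
    norm_num [expand] at h0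
    simp only [hDt.mul dm20 de20, hDx.mul (f := fun w => m20 w * e20 w) (dm20.mul de20) du0x,
      hDy.mul (f := fun w => m20 w * e20 w) (dm20.mul de20) du0y, hDx.mul dm20 de20, hDy.mul dm20 de20]
    linear_combination h0
end
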